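/- There is no function v of class C⁴ on the closed unit square Q̄ = [0,1]² satisfying Δv = x₁x₂ in Q together with the boundary conditions ∂₁v(0, x₂) = 0 for all x₂ ∈ [0,1] and ∂₂v(x₁, 0) = 0 for all x₁ ∈ [0,1]. -/

import Mathlib

/-!
Write `∂_w f` for the derivative of `f` in direction `w`, so that the equation reads
`∂₁∂₁v + ∂₂∂₂v = x₁x₂`. Applying `∂₂∂₁` to it at the origin gives `1` on the right-hand side,
since `∂₁(x₁x₂) = x₂` along every horizontal segment. On the left, commuting the (symmetric)
derivatives turns the two terms into `∂₁∂₁∂₁(∂₂v)` and `∂₂∂₂∂₂(∂₁v)`. The first vanishes at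
the origin because `∂₂v` vanishes on the bottom edge and derivatives along that edge keep it
vanishing; the second likewise, because `∂₁v` vanishes on the left edge. Hence `0 = 1`.
-/

noncomputable def pt (a b : ℝ) : EuclideanSpace ℝ (Fin 2) :=
  (WithLp.equiv 2 (Fin 2 → ℝ)).symm ![a, b]

/-- mixed second partial derivative `∂ᵥ∂_w v` -/
noncomputable def D2 (v : EuclideanSpace ℝ (Fin 2) → ℝ)
    (x w w' : EuclideanSpace ℝ (Fin 2)) : ℝ :=
  fderiv ℝ (fun y => fderiv ℝ v y w') x w

open Set

theorem pt_eq_smul_add_smul (a b : ℝ) : pt a b = a • pt 1 0 + b • pt 0 1 := by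
  ext i
  fin_cases i <;> simp [pt]

theorem pt_zero_left (b : ℝ) : pt 0 b = b • pt 0 1 := by
  simp [pt_eq_smul_add_smul 0 b]

theorem pt_zero_right (a : ℝ) : pt a 0 = a • pt 1 0 := by
  simp [pt_eq_smul_add_smul a 0]

section DirDeriv

variable {E F : Type*} [NormedAddCommGroup E] [NormedSpace ℝ E]
  [NormedAddCommGroup F] [NormedSpace ℝ F]

noncomputable def dirDeriv (w : E) (f : E → F) : E → F := fun y => fderiv ℝ f y w

theorem contDiff_dirDeriv {n : ℕ} {f : E → F} (w : E) (hf : ContDiff ℝ (n + 1 : ℕ) f) :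
    ContDiff ℝ n (dirDeriv w f) :=
  (hf.fderiv_right (by push_cast; rfl)).clm_apply contDiff_const

theorem contDiff_iterate_dirDeriv {n k : ℕ} {f : E → F} (w : E)
    (hf : ContDiff ℝ (n + k : ℕ) f) : ContDiff ℝ n ((dirDeriv w)^[k] f) := by
  induction k generalizing f with
  | zero => simpa using hf
  | succ k ih => exact ih (contDiff_dirDeriv w hf)

theorem dirDeriv_add {f g : E → F} (hf : Differentiable ℝ f) (hg : Differentiable ℝ g) (w : E) :
    dirDeriv w (f + g) = dirDeriv w f + dirDeriv w g := by
  funext y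
  simp [dirDeriv, fderiv_add (hf y) (hg y)]

theorem dirDeriv_comm {f : E → F} (hf : ContDiff ℝ 2 f) (w w' : E) :
    dirDeriv w (dirDeriv w' f) = dirDeriv w' (dirDeriv w f) := by
  funext x
  have hd : DifferentiableAt ℝ (fderiv ℝ f) x :=
    (hf.fderiv_right (m := 1) le_rfl).differentiable one_ne_zero x
  have hsnd : ∀ u u' : E, dirDeriv u (dirDeriv u' f) x = fderiv ℝ (fderiv ℝ f) x u u' := by
    intro u u'
    change fderiv ℝ (fun y => fderiv ℝ f y u') x u = _
    rw [fderiv_clm_apply hd (differentiableAt_const u')]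
    simp
  rw [hsnd, hsnd, (hf.contDiffAt.isSymmSndFDerivAt (by simp)).eq]

theorem dirDeriv_iterate_dirDeriv_comm {n : ℕ} {f : E → F} (hf : ContDiff ℝ (n + 1 : ℕ) f)
    (w w' : E) : dirDeriv w ((dirDeriv w')^[n] f) = (dirDeriv w')^[n] (dirDeriv w f) := by
  induction n with
  | zero => rfl
  | succ n ih =>
    have hC2 : ContDiff ℝ 2 ((dirDeriv w')^[n] f) :=
      contDiff_iterate_dirDeriv (n := 2) w' (by rwa [show 2 + n = n + 1 + 1 by omega])
    rw [Function.iterate_succ_apply', Function.iterate_succ_apply', dirDeriv_comm hC2,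
      ih (hf.of_le (by norm_cast; omega))]

theorem dirDeriv_eq_of_eqOn_segment {f : E → F} {g : ℝ → F} {x w : E} {t : ℝ} {g' : F}
    (hf : DifferentiableAt ℝ f (x + t • w)) (hfg : ∀ τ ∈ Icc (0 : ℝ) 1, f (x + τ • w) = g τ)
    (hg : HasDerivAt g g' t) (ht : t ∈ Icc (0 : ℝ) 1) : dirDeriv w f (x + t • w) = g' := by
  have hline : HasDerivAt (fun τ : ℝ => x + τ • w) w t := by
    simpa using ((hasDerivAt_id t).smul_const w).const_add x
  have hcomp : HasDerivWithinAt g (dirDeriv w f (x + t • w)) (Icc 0 1) t :=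
    (hf.hasFDerivAt.comp_hasDerivAt t hline).hasDerivWithinAt.congr
      (fun τ hτ => (hfg τ hτ).symm) (hfg t ht).symm
  exact (uniqueDiffOn_Icc zero_lt_one t ht).eq_deriv _ hcomp hg.hasDerivWithinAt

theorem iterate_dirDeriv_eq_zero_of_eqOn_segment {n : ℕ} {f : E → F} (hf : ContDiff ℝ n f)
    {x w : E} (h0 : ∀ t ∈ Icc (0 : ℝ) 1, f (x + t • w) = 0) :
    ∀ t ∈ Icc (0 : ℝ) 1, (dirDeriv w)^[n] f (x + t • w) = 0 := by
  induction n generalizing f with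
  | zero => simpa using h0
  | succ n ih =>
    refine ih (contDiff_dirDeriv w hf) fun t ht => ?_
    exact dirDeriv_eq_of_eqOn_segment ((hf.differentiable (by simp)) _) h0
      (hasDerivAt_const t 0) ht

end DirDeriv

section Square

variable {E : Type*} [NormedAddCommGroup E] [NormedSpace ℝ E]

noncomputable def laplacianAlong (e₁ e₂ : E) (v : E → ℝ) : E → ℝ :=
  dirDeriv e₁ (dirDeriv e₁ v) + dirDeriv e₂ (dirDeriv e₂ v)

theorem contDiff_laplacianAlong {v : E → ℝ} (hv : ContDiff ℝ 4 v) (e₁ e₂ : E) :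
    ContDiff ℝ 2 (laplacianAlong e₁ e₂ v) :=
  (contDiff_iterate_dirDeriv (k := 2) e₁ hv).add (contDiff_iterate_dirDeriv (k := 2) e₂ hv)

theorem dirDeriv_dirDeriv_eq_one_of_eq_mul {u : E → ℝ} (hu : ContDiff ℝ 2 u) (e₁ e₂ : E)
    (h : ∀ s ∈ Icc (0 : ℝ) 1, ∀ t ∈ Icc (0 : ℝ) 1, u (s • e₁ + t • e₂) = s * t) :
    dirDeriv e₂ (dirDeriv e₁ u) 0 = 1 := by
  have hmem : (0 : ℝ) ∈ Icc (0 : ℝ) 1 := ⟨le_rfl, zero_le_one⟩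
  have hleft : ∀ t ∈ Icc (0 : ℝ) 1, dirDeriv e₁ u (0 + t • e₂) = t := fun t ht => by
    simpa using dirDeriv_eq_of_eqOn_segment (x := t • e₂) ((hu.differentiable (by simp)) _)
      (fun s hs => by rw [add_comm]; exact h s hs t ht) (hasDerivAt_mul_const t) hmem
  simpa using dirDeriv_eq_of_eqOn_segment ((contDiff_dirDeriv (n := 1) e₁ hu).differentiable
    (by simp) _) hleft (hasDerivAt_id 0) hmem

theorem dirDeriv_dirDeriv_laplacianAlong_eq_zero {v : E → ℝ} (hv : ContDiff ℝ 4 v) (e₁ e₂ : E)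
    (h₁ : ∀ t ∈ Icc (0 : ℝ) 1, dirDeriv e₁ v (t • e₂) = 0)
    (h₂ : ∀ s ∈ Icc (0 : ℝ) 1, dirDeriv e₂ v (s • e₁) = 0) :
    dirDeriv e₂ (dirDeriv e₁ (laplacianAlong e₁ e₂ v)) 0 = 0 := by
  have hmem : (0 : ℝ) ∈ Icc (0 : ℝ) 1 := ⟨le_rfl, zero_le_one⟩
  have hC3 (w : E) : ContDiff ℝ 3 (dirDeriv w v) := contDiff_dirDeriv w hv
  have hdiff2 (w w' : E) : Differentiable ℝ (dirDeriv w (dirDeriv w' v)) :=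
    (contDiff_dirDeriv (n := 2) w (hC3 w')).differentiable (by simp)
  have hdiff3 (w w' w'' : E) : Differentiable ℝ (dirDeriv w (dirDeriv w' (dirDeriv w'' v))) :=
    (contDiff_dirDeriv (n := 1) w (contDiff_dirDeriv (n := 2) w' (hC3 w''))).differentiable
      (by simp)
  have hcomm₁ : dirDeriv e₂ (dirDeriv e₁ (dirDeriv e₁ (dirDeriv e₁ v)))
      = (dirDeriv e₁)^[3] (dirDeriv e₂ v) :=
    dirDeriv_iterate_dirDeriv_comm hv e₂ e₁
  have hcomm₂ : dirDeriv e₂ (dirDeriv e₁ (dirDeriv e₂ (dirDeriv e₂ v)))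
      = (dirDeriv e₂)^[3] (dirDeriv e₁ v) :=
    congrArg (dirDeriv e₂) (dirDeriv_iterate_dirDeriv_comm (n := 2) (hv.of_le (by norm_num)) e₁ e₂)
  have hvanish₁ := iterate_dirDeriv_eq_zero_of_eqOn_segment (hC3 e₂) (x := 0)
    (fun s hs => by simpa using h₂ s hs) 0 hmem
  have hvanish₂ := iterate_dirDeriv_eq_zero_of_eqOn_segment (hC3 e₁) (x := 0)
    (fun t ht => by simpa using h₁ t ht) 0 hmem
  rw [laplacianAlong, dirDeriv_add (hdiff2 e₁ e₁) (hdiff2 e₂ e₂), dirDeriv_add (hdiff3 e₁ e₁ e₁) (hdiff3 e₁ e₂ e₂),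
    Pi.add_apply, hcomm₁, hcomm₂]
  simpa using congrArg₂ (· + ·) hvanish₁ hvanish₂

end Square

theorem stmt_15 :
    ¬∃ v : EuclideanSpace ℝ (Fin 2) → ℝ, ContDiff ℝ 4 v ∧
      (∀ x₁ ∈ Set.Icc (0 : ℝ) 1, ∀ x₂ ∈ Set.Icc (0 : ℝ) 1,
        D2 v (pt x₁ x₂) (pt 1 0) (pt 1 0) + D2 v (pt x₁ x₂) (pt 0 1) (pt 0 1) = x₁ * x₂) ∧
      (∀ x₂ ∈ Set.Icc (0 : ℝ) 1, fderiv ℝ v (pt 0 x₂) (pt 1 0) = 0) ∧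
      (∀ x₁ ∈ Set.Icc (0 : ℝ) 1, fderiv ℝ v (pt x₁ 0) (pt 0 1) = 0) := by
  rintro ⟨v, hv, hpde, hbc₁, hbc₂⟩
  have hone := dirDeriv_dirDeriv_eq_one_of_eq_mul (contDiff_laplacianAlong hv (pt 1 0) (pt 0 1))
    (pt 1 0) (pt 0 1) fun s hs t ht => by
      rw [← pt_eq_smul_add_smul]
      exact hpde s hs t ht
  have hzero := dirDeriv_dirDeriv_laplacianAlong_eq_zero hv (pt 1 0) (pt 0 1)
    (fun t ht => by rw [← pt_zero_left]; exact hbc₁ t ht)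
    (fun s hs => by rw [← pt_zero_right]; exact hbc₂ s hs)
  exact zero_ne_one (hzero.symm.trans hone)
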